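/- Let W, A ∈ ℝ^{p_1×p_2} with rank(A) ≤ r and rank(W) = r″, and let r, r′ be integers with r < r′ < r″. Let P_{r′}(W) denote a best rank-r′ approximation of W in Frobenius norm (truncated singular value decomposition keeping the r′ largest singular values). Then ‖P_{r′}(W) − W‖_F² ≤ ((r″ − r′)/(r″ − r))·‖A − W‖_F². -/

import Mathlib

open scoped BigOperators
open MeasureTheory ProbabilityTheory Filter

namespace TTpaper

/-- A real tensor of order `d` with dimension vector `p`. -/
abbrev Tensor {d : ℕ} (p : Fin d → ℕ) : Type := ((k : Fin d) → Fin (p k)) → ℝ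

/-- Frobenius norm of a tensor. -/
noncomputable def fnorm {d : ℕ} {p : Fin d → ℕ} (X : Tensor p) : ℝ :=
  Real.sqrt (∑ i, X i ^ 2)

/-- Inner product of two tensors of the same size (sum of entrywise products). -/
noncomputable def tinner {d : ℕ} {p : Fin d → ℕ} (X Y : Tensor p) : ℝ :=
  ∑ i, X i * Y i

/-- The `k`-th sequential matricization of a tensor: rows enumerate the indices of
modes `1,…,k` and columns enumerate the indices of modes `k+1,…,d`. -/
def seqMat {d : ℕ} (p : Fin d → ℕ) (k : ℕ) (X : Tensor p) :
    Matrix ((j : {j : Fin d // j.val < k}) → Fin (p j.1))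
      ((j : {j : Fin d // ¬ j.val < k}) → Fin (p j.1)) ℝ :=
  fun a b => X fun j => if h : j.val < k then a ⟨j, h⟩ else b ⟨j, h⟩

/-- The entries of the tensor-train chain product
`G_1(i_1) G_2(i_2) ⋯ G_d(i_d)`, written as a sum over all bond indices. -/
noncomputable def ttEntry {d : ℕ} (p : Fin d → ℕ) (r : Fin (d + 1) → ℕ)
    (G : (k : Fin d) → Fin (p k) → Fin (r k.castSucc) → Fin (r k.succ) → ℝ) : Tensor p :=
  fun i => ∑ a : (j : Fin (d + 1)) → Fin (r j),
    ∏ k : Fin d, G k (i k) (a k.castSucc) (a k.succ)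

/-- `X` is in tensor-train format with bond dimension vector `r`
(whose boundary entries equal `1`). -/
def IsTT {d : ℕ} (p : Fin d → ℕ) (r : Fin (d + 1) → ℕ) (X : Tensor p) : Prop :=
  r 0 = 1 ∧ r (Fin.last d) = 1 ∧ ∃ G, X = ttEntry p r G

/-- Merge an index for the first `n` modes and an index for the last `m` modes into
an index for a tensor with appended dimension vector. -/
def splice {n m : ℕ} {q : Fin n → ℕ} {p : Fin m → ℕ}
    (a : (j : Fin n) → Fin (q j)) (b : (i : Fin m) → Fin (p i)) :
    (j : Fin (n + m)) → Fin (Fin.append q p j) :=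
  Fin.addCases (motive := fun j => Fin (Fin.append q p j))
    (fun i => Fin.cast (Fin.append_left q p i).symm (a i))
    (fun i => Fin.cast (Fin.append_right q p i).symm (b i))

/-- The part of an index of an appended tensor corresponding to the first block of modes. -/
def unleft {n m : ℕ} {q : Fin n → ℕ} {p : Fin m → ℕ}
    (idx : (j : Fin (n + m)) → Fin (Fin.append q p j)) (i : Fin n) : Fin (q i) :=
  Fin.cast (Fin.append_left q p i) (idx (Fin.castAdd m i))

/-- The part of an index of an appended tensor corresponding to the second block of modes. -/
def unright {n m : ℕ} {q : Fin n → ℕ} {p : Fin m → ℕ}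
    (idx : (j : Fin (n + m)) → Fin (Fin.append q p j)) (i : Fin m) : Fin (p i) :=
  Fin.cast (Fin.append_right q p i) (idx (Fin.natAdd n i))

/-- Generalized inner product `⟨A, X⟩` of a coefficient tensor
`A ∈ ℝ^{q_1×⋯×q_n×p_1×⋯×p_m}` with a tensor `X ∈ ℝ^{p_1×⋯×p_m}`. -/
noncomputable def ginner {n m : ℕ} {q : Fin n → ℕ} {p : Fin m → ℕ}
    (A : Tensor (Fin.append q p)) (X : Tensor p) : Tensor q :=
  fun j => ∑ i, A (splice j i) * X i

/-- The matricization of an appended tensor separating the two blocks of modes. -/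
def gmat {n m : ℕ} {q : Fin n → ℕ} {p : Fin m → ℕ} (A : Tensor (Fin.append q p)) :
    Matrix ((j : Fin n) → Fin (q j)) ((i : Fin m) → Fin (p i)) ℝ :=
  fun a b => A (splice a b)

/-- The rearrangement `M(A)` of an appended tensor reversing the order of the
modes of its second block. -/
def modeRev {n m : ℕ} {q : Fin n → ℕ} {p : Fin m → ℕ} (A : Tensor (Fin.append q p)) :
    Tensor (Fin.append q (fun i => p i.rev)) :=
  fun idx => A (splice (unleft idx)
    (fun i => Fin.cast (congrArg p (Fin.rev_rev i)) (unright idx i.rev)))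

/-- Convert a row index of the `n`-th sequential matricization of an appended tensor
into an index over the first block of modes. -/
def unrow {n m : ℕ} {q : Fin n → ℕ} {p : Fin m → ℕ}
    (a : (j : {j : Fin (n + m) // j.val < n}) → Fin (Fin.append q p j.1)) (j : Fin n) :
    Fin (q j) :=
  Fin.cast (Fin.append_left q p j) (a ⟨Fin.castAdd m j, j.isLt⟩)

/-- Convert a column index of the `n`-th sequential matricization of an appended tensor
into an index over the second block of modes. -/
def uncol {n m : ℕ} {q : Fin n → ℕ} {p : Fin m → ℕ}
    (b : (j : {j : Fin (n + m) // ¬ j.val < n}) → Fin (Fin.append q p j.1)) (i : Fin m) :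
    Fin (p i) :=
  Fin.cast (Fin.append_right q p i)
    (b ⟨Fin.natAdd n i, Nat.not_lt.mpr (Nat.le_add_right n i.val)⟩)

/-- Dimension vector `(L, p_1, …, p_d)` of a stacked tensor. -/
def consDim {d : ℕ} (L : ℕ) (p : Fin d → ℕ) : Fin (d + 1) → ℕ :=
  Fin.cons (α := fun _ => ℕ) L p

/-- Head (lag) component of an index of a stacked tensor with dimensions `(L, p_1, …, p_d)`. -/
def headIdx {d L : ℕ} {p : Fin d → ℕ}
    (idx : (j : Fin (d + 1)) → Fin (consDim L p j)) : Fin L :=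
  Fin.cast (Fin.cons_zero (α := fun _ => ℕ) L p) (idx 0)

/-- Tail component of an index of a stacked tensor with dimensions `(L, p_1, …, p_d)`. -/
def tailIdx {d L : ℕ} {p : Fin d → ℕ}
    (idx : (j : Fin (d + 1)) → Fin (consDim L p j)) (k : Fin d) : Fin (p k) :=
  Fin.cast (Fin.cons_succ (α := fun _ => ℕ) L p k) (idx k.succ)

/-- Build an index of a stacked tensor with dimensions `(L, p_1, …, p_d)` from a lag
and an index over `(p_1, …, p_d)`. -/
def consIdx {d L : ℕ} {p : Fin d → ℕ} (h : Fin L) (b : (k : Fin d) → Fin (p k)) :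
    (j : Fin (d + 1)) → Fin (consDim L p j) :=
  fun j => Fin.cases (motive := fun j => Fin (consDim L p j))
    (Fin.cast (Fin.cons_zero (α := fun _ => ℕ) L p).symm h)
    (fun k => Fin.cast (Fin.cons_succ (α := fun _ => ℕ) L p k).symm (b k)) j

/-- The `j`-th lag coefficient tensor `A_j` sliced out of a stacked coefficient tensor
`A_{1:p} ∈ ℝ^{p_1×⋯×p_d×L×p_1×⋯×p_d}`. -/
def lagSlice {d L : ℕ} {p : Fin d → ℕ}
    (A : Tensor (Fin.append p (consDim L p))) (h : Fin L) :
    Tensor (Fin.append p p) :=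
  fun idx => A (splice (unleft idx) (consIdx h (unright idx)))

/-- Squared Frobenius norm of a matrix. -/
noncomputable def mfnormSq {I J : Type*} [Fintype I] [Fintype J] (M : Matrix I J ℝ) : ℝ :=
  ∑ i, ∑ j, M i j ^ 2

/-- Frobenius norm of a matrix. -/
noncomputable def mfnorm {I J : Type*} [Fintype I] [Fintype J] (M : Matrix I J ℝ) : ℝ :=
  Real.sqrt (mfnormSq M)

/-- The minimal squared Frobenius distance of `M` to the matrices of rank at most `k`,
i.e. the sum of its squared singular values of index `> k`. -/
noncomputable def tailSq {I J : Type*} [Fintype I] [Fintype J]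
    (M : Matrix I J ℝ) (k : ℕ) : ℝ :=
  sInf {x | ∃ C : Matrix I J ℝ, C.rank ≤ k ∧ x = mfnormSq (M - C)}

/-- The `r`-th largest singular value of a matrix (for `r ≥ 1`). -/
noncomputable def singval {I J : Type*} [Fintype I] [Fintype J]
    (M : Matrix I J ℝ) (r : ℕ) : ℝ :=
  Real.sqrt (tailSq M (r - 1) - tailSq M r)

/-- The set of Rayleigh-quotient values `re(v* Ā(z)A(z) v)` over unit `z ∈ ℂ` and unit
vectors `v`; its infimum is `μ_min` and its supremum is `μ_max` of the matrix
polynomial `A(z) = Φ z`. -/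
noncomputable def muQuadSet {I : Type*} [Fintype I] (Φ : ℂ → Matrix I I ℂ) : Set ℝ :=
  {x | ∃ z : ℂ, ‖z‖ = 1 ∧ ∃ v : I → ℂ, (∑ i, Complex.normSq (v i)) = 1 ∧
    x = (dotProduct (star v) (((Φ z).conjTranspose * Φ z).mulVec v)).re}

/-- The matrix polynomial `A(z) = I - z·A` of a lag-one autoregression. -/
noncomputable def arPoly {I : Type*} [Fintype I] [DecidableEq I]
    (M : Matrix I I ℝ) (z : ℂ) : Matrix I I ℂ :=
  1 - z • M.map (Complex.ofReal)

/-- `μ_min` of a lag-one autoregression coefficient matrix. -/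
noncomputable def muMin {I : Type*} [Fintype I] [DecidableEq I] (M : Matrix I I ℝ) : ℝ :=
  sInf (muQuadSet (arPoly M))

/-- `μ_max` of a lag-one autoregression coefficient matrix. -/
noncomputable def muMax {I : Type*} [Fintype I] [DecidableEq I] (M : Matrix I I ℝ) : ℝ :=
  sSup (muQuadSet (arPoly M))

/-- All complex eigenvalues of the real matrix `M` have modulus `< 1`
(spectral radius strictly less than one). -/
def SpecLT1 {I : Type*} [Fintype I] [DecidableEq I] (M : Matrix I I ℝ) : Prop :=
  ∀ z ∈ spectrum ℂ (M.map (Complex.ofReal)), ‖z‖ < 1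

/-- A random vector is `c`-sub-Gaussian: its moment generating function satisfies
`E exp⟨u, x⟩ ≤ exp(c‖u‖²/2)` for all `u`. -/
def SubGVec {Ω : Type*} [MeasurableSpace Ω] (μ : Measure Ω) {I : Type*} [Fintype I]
    (c : ℝ) (x : Ω → I → ℝ) : Prop :=
  ∀ u : I → ℝ, ∫ ω, Real.exp (∑ i, u i * x ω i) ∂μ ≤ Real.exp (c * (∑ i, u i ^ 2) / 2)

/-- A random variable is `c`-sub-Gaussian. -/
def SubGScalar {Ω : Type*} [MeasurableSpace Ω] (μ : Measure Ω) (c : ℝ) (ξ : Ω → ℝ) : Prop :=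
  ∀ u : ℝ, ∫ ω, Real.exp (u * ξ ω) ∂μ ≤ Real.exp (c * u ^ 2 / 2)

/-- Extend an interior rank vector `(r_1, …, r_K)` to all integer indices, with the
boundary ranks equal to `1`. -/
def extRank {K : ℕ} (R : Fin K → ℕ) (k : ℕ) : ℕ :=
  if h : 1 ≤ k ∧ k ≤ K then R ⟨k - 1, by omega⟩ else 1

/-! By Eckart–Young, the squared distance `τ_k = tailSq W k` from `W` to the matrices of rank
`≤ k` is `∑_{k ≤ i < r''} σ_{i+1}²`, where `r'' = rank W`. For the lower bound, an orthonormal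
basis `u` of `ker C` (`rank C ≤ k`, `W` with `n` columns) gives
`‖W - C‖² ≥ ∑ ‖W u_j‖² = ∑ σ_{i+1}² c_i` with weights `c_i ∈ [0, 1]` of total mass `≥ n - k`,
and such a weighted sum is at least the sum of the `n - k` smallest `σ_{i+1}²`.
Since the `σ_i` decrease, the mean of the last `r'' - r'` squared singular values is at most
the mean of the last `r'' - r`, that is `(r'' - r) τ_{r'} ≤ (r'' - r') τ_r`. Finally
`‖P - W‖² ≤ τ_{r'}` as `P` is a best approximation, and `τ_r ≤ ‖A - W‖²` as `rank A ≤ r`. -/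

open Finset Matrix Module
open scoped RealInnerProductSpace

theorem _root_.Finset.card_nsmul_sum_le_card_nsmul_sum {ι M : Type*} [AddCommMonoid M]
    [PartialOrder M] [IsOrderedAddMonoid M] {f : ι → M} {s t : Finset ι}
    (h : ∀ i ∈ s, ∀ j ∈ t, f j ≤ f i) :
    #s • ∑ j ∈ t, f j ≤ #t • ∑ i ∈ s, f i :=
  calc #s • ∑ j ∈ t, f j = ∑ _i ∈ s, ∑ j ∈ t, f j := by rw [sum_const]
    _ ≤ ∑ i ∈ s, ∑ _j ∈ t, f i := sum_le_sum fun i hi => sum_le_sum fun j hj => h i hi j hj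
    _ = #t • ∑ i ∈ s, f i := by rw [sum_comm, sum_const]

theorem _root_.Antitone.sub_mul_sum_Ico_le {f : ℕ → ℝ} (hf : Antitone f) {a b c : ℕ}
    (hab : a ≤ b) (hbc : b ≤ c) :
    ((c : ℝ) - a) * ∑ i ∈ Ico b c, f i ≤ ((c : ℝ) - b) * ∑ i ∈ Ico a c, f i := by
  have hblock := card_nsmul_sum_le_card_nsmul_sum (f := f) (s := Ico a b) (t := Ico b c)
    fun i hi j hj => hf ((mem_Ico.1 hi).2.trans_le (mem_Ico.1 hj).1).le
  rw [nsmul_eq_mul, nsmul_eq_mul, Nat.card_Ico, Nat.card_Ico, Nat.cast_sub hab,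
    Nat.cast_sub hbc] at hblock
  rw [← sum_Ico_consecutive f hab hbc]
  nlinarith

theorem sum_le_sum_mul_of_threshold {ι : Type*} [Fintype ι] [DecidableEq ι] {f c : ι → ℝ}
    {s : Finset ι} {θ : ℝ} (hθ : 0 ≤ θ) (hs : ∀ i ∈ s, f i ≤ θ) (hsc : ∀ i ∉ s, θ ≤ f i)
    (hc0 : ∀ i, 0 ≤ c i) (hc1 : ∀ i, c i ≤ 1) (hcard : (#s : ℝ) ≤ ∑ i, c i) :
    ∑ i ∈ s, f i ≤ ∑ i, f i * c i := by
  have key : ∀ i, (if i ∈ s then f i else 0)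
      ≤ f i * c i + θ * ((if i ∈ s then 1 else 0) - c i) := by
    intro i
    split_ifs with hi
    · nlinarith [hs i hi, hc1 i]
    · nlinarith [hsc i hi, hc0 i]
  calc ∑ i ∈ s, f i = ∑ i, if i ∈ s then f i else 0 := by simp
    _ ≤ ∑ i, (f i * c i + θ * ((if i ∈ s then 1 else 0) - c i)) := sum_le_sum fun i _ => key i
    _ = ∑ i, f i * c i + θ * (#s - ∑ i, c i) := by
      rw [sum_add_distrib, ← mul_sum, sum_sub_distrib, sum_boole]
      simp
    _ ≤ ∑ i, f i * c i := by nlinarith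

theorem sum_filter_le_sum_mul_of_antitone {N : ℕ} {f c : Fin N → ℝ} (hf : Antitone f)
    (hf0 : ∀ i, 0 ≤ f i) (hc0 : ∀ i, 0 ≤ c i) (hc1 : ∀ i, c i ≤ 1) {k : ℕ}
    (hk : ((N - k : ℕ) : ℝ) ≤ ∑ i, c i) :
    ∑ i with k ≤ i.val, f i ≤ ∑ i, f i * c i := by
  have hcard : #{i : Fin N | k ≤ i.val} = N - k := by
    have := card_filter_add_card_filter_not (s := univ) (fun i : Fin N => (i : ℕ) < k)
    simp only [not_lt, card_univ, Fintype.card_fin, Fin.card_filter_val_lt] at this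
    omega
  rcases lt_or_ge k N with hkN | hkN
  · refine sum_le_sum_mul_of_threshold (hf0 ⟨k, hkN⟩) (fun i hi => hf ?_) (fun i hi => hf ?_)
      hc0 hc1 (by rwa [hcard])
    · simpa [Fin.le_def] using hi
    · simp only [mem_filter, mem_univ, true_and, not_le] at hi
      exact Fin.le_def.2 hi.le
  · refine sum_le_sum_mul_of_threshold le_rfl (fun i hi => ?_) (fun i _ => hf0 i) hc0 hc1
      (by rw [hcard]; simpa using hk)
    simp only [mem_filter, mem_univ, true_and] at hi
    omega

section Frobenius

variable {I J : Type*} [Fintype J]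

theorem toEuclideanLin_apply_eq_inner [DecidableEq J] (M : Matrix I J ℝ) (x : EuclideanSpace ℝ J)
    (a : I) : toEuclideanLin M x a = ⟪WithLp.toLp 2 (M a), x⟫ := by
  simp [toLpLin_apply, mulVec, dotProduct, PiLp.inner_apply, mul_comm]

variable [Fintype I]

theorem mfnormSq_nonneg (M : Matrix I J ℝ) : 0 ≤ mfnormSq M := by
  unfold mfnormSq
  positivity

theorem mfnorm_sq (M : Matrix I J ℝ) : mfnorm M ^ 2 = mfnormSq M :=
  Real.sq_sqrt (mfnormSq_nonneg M)

theorem mfnormSq_sub_comm (M N : Matrix I J ℝ) : mfnormSq (M - N) = mfnormSq (N - M) := by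
  simp only [mfnormSq, Matrix.sub_apply]
  exact sum_congr rfl fun a _ => sum_congr rfl fun b _ => by ring

theorem tailSq_le_mfnormSq (W : Matrix I J ℝ) {C : Matrix I J ℝ} {k : ℕ} (hC : C.rank ≤ k) :
    tailSq W k ≤ mfnormSq (W - C) :=
  csInf_le ⟨0, by rintro _ ⟨C, -, rfl⟩; exact mfnormSq_nonneg _⟩ ⟨C, hC, rfl⟩

theorem le_tailSq {W : Matrix I J ℝ} {k : ℕ} {x : ℝ}
    (h : ∀ C : Matrix I J ℝ, C.rank ≤ k → x ≤ mfnormSq (W - C)) : x ≤ tailSq W k :=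
  le_csInf ⟨_, 0, by simp, rfl⟩ (by rintro _ ⟨C, hC, rfl⟩; exact h C hC)

theorem mfnormSq_eq_sum_norm_sq_row (M : Matrix I J ℝ) :
    mfnormSq M = ∑ a, ‖(WithLp.toLp 2 (M a) : EuclideanSpace ℝ J)‖ ^ 2 := by
  simp [mfnormSq, EuclideanSpace.real_norm_sq_eq]

theorem mfnormSq_sub_le_tailSq {W P : Matrix I J ℝ} {k : ℕ}
    (hP : ∀ B : Matrix I J ℝ, B.rank ≤ k → mfnorm (P - W) ≤ mfnorm (B - W)) :
    mfnormSq (P - W) ≤ tailSq W k :=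
  le_tailSq fun C hC => by
    rw [mfnormSq_sub_comm W C, ← mfnorm_sq, ← mfnorm_sq]
    exact pow_le_pow_left₀ (Real.sqrt_nonneg _) (hP C hC) 2

variable [DecidableEq J]

theorem norm_sq_toEuclideanLin_apply (M : Matrix I J ℝ) (x : EuclideanSpace ℝ J) :
    ‖toEuclideanLin M x‖ ^ 2 = ∑ a, ⟪x, WithLp.toLp 2 (M a)⟫ ^ 2 := by
  simp [EuclideanSpace.real_norm_sq_eq, toEuclideanLin_apply_eq_inner, real_inner_comm]

theorem sum_norm_sq_toEuclideanLin_le_mfnormSq (M : Matrix I J ℝ) {ι : Type*} [Fintype ι]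
    {u : ι → EuclideanSpace ℝ J} (hu : Orthonormal ℝ u) :
    ∑ j, ‖toEuclideanLin M (u j)‖ ^ 2 ≤ mfnormSq M := by
  simp_rw [mfnormSq_eq_sum_norm_sq_row, norm_sq_toEuclideanLin_apply]
  rw [sum_comm]
  gcongr with a
  simpa [real_inner_comm, sq_abs] using hu.sum_inner_products_le (WithLp.toLp 2 (M a)) (s := univ)

theorem mfnormSq_eq_sum_norm_sq_toEuclideanLin (M : Matrix I J ℝ) {ι : Type*} [Fintype ι]
    (b : OrthonormalBasis ι ℝ (EuclideanSpace ℝ J)) :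
    mfnormSq M = ∑ j, ‖toEuclideanLin M (b j)‖ ^ 2 := by
  simp_rw [mfnormSq_eq_sum_norm_sq_row, norm_sq_toEuclideanLin_apply]
  rw [sum_comm]
  simp_rw [b.sum_sq_inner_right]

theorem rank_eq_finrank_range_toEuclideanLin (M : Matrix I J ℝ) :
    M.rank = finrank ℝ (LinearMap.range (toEuclideanLin M)) :=
  M.rank_eq_finrank_range_toLin (EuclideanSpace.basisFun I ℝ).toBasis
    (EuclideanSpace.basisFun J ℝ).toBasis

end Frobenius

section SingularValues

variable {I J : Type*} [Fintype I] [Fintype J] [DecidableEq J] (W : Matrix I J ℝ)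

noncomputable def gramEigenvalues : Fin (Fintype.card J) → ℝ :=
  (toEuclideanLin W).isSymmetric_adjoint_comp_self.eigenvalues finrank_euclideanSpace

noncomputable def gramEigenbasis : OrthonormalBasis (Fin (Fintype.card J)) ℝ (EuclideanSpace ℝ J) :=
  (toEuclideanLin W).isSymmetric_adjoint_comp_self.eigenvectorBasis finrank_euclideanSpace

theorem gramEigenvalues_antitone : Antitone (gramEigenvalues W) :=
  LinearMap.IsSymmetric.eigenvalues_antitone ..

theorem inner_toEuclideanLin_gramEigenbasis (i : Fin (Fintype.card J)) (x : EuclideanSpace ℝ J) :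
    ⟪toEuclideanLin W (gramEigenbasis W i), toEuclideanLin W x⟫ =
      gramEigenvalues W i * ⟪gramEigenbasis W i, x⟫ := by
  rw [← LinearMap.adjoint_inner_left, ← LinearMap.comp_apply, gramEigenbasis,
    LinearMap.IsSymmetric.apply_eigenvectorBasis, real_inner_smul_left, gramEigenvalues]
  rfl

theorem norm_sq_toEuclideanLin_gramEigenbasis (i : Fin (Fintype.card J)) :
    ‖toEuclideanLin W (gramEigenbasis W i)‖ ^ 2 = gramEigenvalues W i := by
  rw [← real_inner_self_eq_norm_sq, inner_toEuclideanLin_gramEigenbasis, real_inner_self_eq_norm_sq,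
    (gramEigenbasis W).orthonormal.1 i, one_pow, mul_one]

theorem gramEigenvalues_nonneg (i : Fin (Fintype.card J)) : 0 ≤ gramEigenvalues W i :=
  norm_sq_toEuclideanLin_gramEigenbasis W i ▸ sq_nonneg _

theorem norm_sq_toEuclideanLin_eq_sum (x : EuclideanSpace ℝ J) :
    ‖toEuclideanLin W x‖ ^ 2 = ∑ i, gramEigenvalues W i * ⟪gramEigenbasis W i, x⟫ ^ 2 := by
  calc ‖toEuclideanLin W x‖ ^ 2
      = ⟪toEuclideanLin W (∑ i, ⟪gramEigenbasis W i, x⟫ • gramEigenbasis W i),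
          toEuclideanLin W x⟫ := by
        rw [(gramEigenbasis W).sum_repr', real_inner_self_eq_norm_sq]
    _ = ∑ i, gramEigenvalues W i * ⟪gramEigenbasis W i, x⟫ ^ 2 := by
        simp_rw [map_sum, map_smul, sum_inner, real_inner_smul_left,
          inner_toEuclideanLin_gramEigenbasis]
        exact sum_congr rfl fun i _ => by ring


theorem tailSq_le_sum_gramEigenvalues (k : ℕ) :
    tailSq W k ≤ ∑ i with k ≤ i.val, gramEigenvalues W i := by
  set b := gramEigenbasis W
  set T := toEuclideanLin W
  set s : Finset (Fin (Fintype.card J)) := {i | i.val < k}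
  let f : EuclideanSpace ℝ J →ₗ[ℝ] EuclideanSpace ℝ I :=
    ∑ i ∈ s, (innerₗ _ (b i)).smulRight (T (b i))
  have hf : ∀ j, (T - f) (b j) = if k ≤ j.val then T (b j) else 0 := by
    intro j
    have hb := orthonormal_iff_ite.1 b.orthonormal
    simp only [LinearMap.sub_apply, f, LinearMap.sum_apply,
      LinearMap.smulRight_apply, innerₗ_apply_apply, hb, ite_smul, one_smul, zero_smul,
      sum_ite_eq', s, mem_filter, mem_univ, true_and]
    split_ifs <;> first | omega | simp
  have hrank : (toEuclideanLin.symm f).rank ≤ k := by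
    rw [rank_eq_finrank_range_toEuclideanLin, LinearEquiv.apply_symm_apply]
    have hrange : LinearMap.range f ≤ Submodule.span ℝ (s.image (T ∘ b) : Set _) := by
      rintro _ ⟨x, rfl⟩
      simp only [f, LinearMap.sum_apply, LinearMap.smulRight_apply]
      exact Submodule.sum_mem _ fun i hi => Submodule.smul_mem _ _
        (Submodule.subset_span (mem_image_of_mem _ hi))
    calc finrank ℝ (LinearMap.range f) ≤ #(s.image (T ∘ b)) :=
          (Submodule.finrank_mono hrange).trans (finrank_span_finset_le_card _)
      _ ≤ #s := card_image_le
      _ ≤ k := by simp [s, Fin.card_filter_val_lt]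
  calc tailSq W k ≤ mfnormSq (W - toEuclideanLin.symm f) := tailSq_le_mfnormSq W hrank
    _ = ∑ j, ‖(T - f) (b j)‖ ^ 2 := by
      rw [mfnormSq_eq_sum_norm_sq_toEuclideanLin _ b, map_sub, LinearEquiv.apply_symm_apply]
    _ = ∑ i with k ≤ i.val, gramEigenvalues W i := by
      rw [sum_filter]
      refine sum_congr rfl fun j _ => ?_
      rw [hf]
      split_ifs
      · exact norm_sq_toEuclideanLin_gramEigenbasis W j
      · simp

theorem sum_gramEigenvalues_le_tailSq (k : ℕ) :
    ∑ i with k ≤ i.val, gramEigenvalues W i ≤ tailSq W k := by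
  refine le_tailSq fun C hC => ?_
  set b := gramEigenbasis W
  have hK : Fintype.card J - k ≤ finrank ℝ (LinearMap.ker (toEuclideanLin C)) := by
    have := LinearMap.finrank_range_add_finrank_ker (toEuclideanLin C)
    rw [← rank_eq_finrank_range_toEuclideanLin, finrank_euclideanSpace] at this
    omega
  set K := LinearMap.ker (toEuclideanLin C)
  set u : Fin (finrank ℝ K) → EuclideanSpace ℝ J := fun j => stdOrthonormalBasis ℝ K j
  have hu : Orthonormal ℝ u :=
    (stdOrthonormalBasis ℝ K).orthonormal.comp_linearIsometry K.subtypeₗᵢ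
  -- `c i = ‖proj_{ker C} (b i)‖²`
  set c : Fin (Fintype.card J) → ℝ := fun i => ∑ j, ⟪b i, u j⟫ ^ 2
  have hc1 : ∀ i, c i ≤ 1 := fun i => by
    simpa [real_inner_comm, sq_abs, b.orthonormal.1 i] using
      hu.sum_inner_products_le (b i) (s := univ)
  have hcsum : ∑ i, c i = finrank ℝ K := by
    simp only [c]
    rw [sum_comm]
    simp [b.sum_sq_inner_right, hu.1]
  calc ∑ i with k ≤ i.val, gramEigenvalues W i ≤ ∑ i, gramEigenvalues W i * c i :=
        sum_filter_le_sum_mul_of_antitone (gramEigenvalues_antitone W) (gramEigenvalues_nonneg W)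
          (fun i => sum_nonneg fun j _ => sq_nonneg _) hc1
          (by rw [hcsum]; exact_mod_cast hK)
    _ = ∑ j, ‖toEuclideanLin W (u j)‖ ^ 2 := by
        simp_rw [norm_sq_toEuclideanLin_eq_sum, c, mul_sum]
        exact sum_comm
    _ = ∑ j, ‖toEuclideanLin (W - C) (u j)‖ ^ 2 := by
        have hker : ∀ j, toEuclideanLin C (u j) = 0 := fun j => (stdOrthonormalBasis ℝ K j).2
        simp [map_sub, hker]
    _ ≤ mfnormSq (W - C) := sum_norm_sq_toEuclideanLin_le_mfnormSq _ hu

theorem tailSq_eq_sum_gramEigenvalues (k : ℕ) :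
    tailSq W k = ∑ i with k ≤ i.val, gramEigenvalues W i :=
  (tailSq_le_sum_gramEigenvalues W k).antisymm (sum_gramEigenvalues_le_tailSq W k)


/-- `sqSingularValue W i = σ_{i+1}(W) ^ 2`, extended by `0` beyond the number of columns. -/
noncomputable def sqSingularValue (i : ℕ) : ℝ :=
  if h : i < Fintype.card J then gramEigenvalues W ⟨i, h⟩ else 0

theorem sqSingularValue_nonneg (i : ℕ) : 0 ≤ sqSingularValue W i := by
  unfold sqSingularValue
  split_ifs
  · exact gramEigenvalues_nonneg W _
  · rfl

theorem sqSingularValue_antitone : Antitone (sqSingularValue W) := by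
  intro i j hij
  by_cases hj : j < Fintype.card J
  · rw [sqSingularValue, sqSingularValue, dif_pos hj, dif_pos (hij.trans_lt hj)]
    exact gramEigenvalues_antitone W (Fin.le_def.2 hij)
  · rw [sqSingularValue, dif_neg hj]
    exact sqSingularValue_nonneg W i

theorem tailSq_eq_sum_Ico (k : ℕ) :
    tailSq W k = ∑ i ∈ Ico k (Fintype.card J), sqSingularValue W i := by
  have hIco : Ico k (Fintype.card J) = (range (Fintype.card J)).filter (k ≤ ·) := by
    ext i
    simp [and_comm]
  rw [tailSq_eq_sum_gramEigenvalues, hIco, sum_filter, sum_filter,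
    ← Fin.sum_univ_eq_sum_range (fun i => if k ≤ i then sqSingularValue W i else 0)]
  simp [sqSingularValue]

theorem sqSingularValue_eq_zero_of_rank_le {ρ i : ℕ} (hW : W.rank ≤ ρ) (hi : ρ ≤ i) :
    sqSingularValue W i = 0 := by
  by_cases hiN : i < Fintype.card J
  · have htail : ∑ j ∈ Ico ρ (Fintype.card J), sqSingularValue W j = 0 :=
      le_antisymm (by simpa [← tailSq_eq_sum_Ico, mfnormSq] using tailSq_le_mfnormSq W hW)
        (sum_nonneg fun j _ => sqSingularValue_nonneg W j)
    exact (sum_eq_zero_iff_of_nonneg fun j _ => sqSingularValue_nonneg W j).1 htail i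
      (mem_Ico.2 ⟨hi, hiN⟩)
  · simp [sqSingularValue, hiN]

theorem tailSq_eq_sum_Ico_of_rank_le {ρ k : ℕ} (hW : W.rank ≤ ρ) :
    tailSq W k = ∑ i ∈ Ico k ρ, sqSingularValue W i := by
  rw [tailSq_eq_sum_Ico, sum_subset (Ico_subset_Ico_right (le_max_left _ ρ)),
    sum_subset (Ico_subset_Ico_right (le_max_right (Fintype.card J) ρ))]
  · intro i hi hiρ
    exact sqSingularValue_eq_zero_of_rank_le W hW (by simp_all)
  · intro i hi hiN
    simp_all [sqSingularValue]

end SingularValues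

theorem statement12_general {p₁ p₂ : ℕ} (W A P : Matrix (Fin p₁) (Fin p₂) ℝ)
    {r r' r'' : ℕ} (hA : A.rank ≤ r) (hW : W.rank = r'')
    (h1 : r < r') (h2 : r' < r'')
    (hPbest : ∀ B : Matrix (Fin p₁) (Fin p₂) ℝ, B.rank ≤ r' →
      mfnorm (P - W) ≤ mfnorm (B - W)) :
    mfnorm (P - W) ^ 2 ≤ (((r'' : ℝ) - r') / ((r'' : ℝ) - r)) * mfnorm (A - W) ^ 2 := by
  have hP : mfnormSq (P - W) ≤ tailSq W r' := mfnormSq_sub_le_tailSq hPbest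
  have hA' : tailSq W r ≤ mfnormSq (A - W) := mfnormSq_sub_comm W A ▸ tailSq_le_mfnormSq W hA
  have hmean : ((r'' : ℝ) - r) * tailSq W r' ≤ ((r'' : ℝ) - r') * tailSq W r := by
    rw [tailSq_eq_sum_Ico_of_rank_le W hW.le, tailSq_eq_sum_Ico_of_rank_le W hW.le]
    exact (sqSingularValue_antitone W).sub_mul_sum_Ico_le h1.le h2.le
  have hr : (0 : ℝ) < r'' - r := sub_pos.2 (by exact_mod_cast h1.trans h2)
  have hr' : (0 : ℝ) ≤ r'' - r' := sub_nonneg.2 (by exact_mod_cast h2.le)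
  rw [mfnorm_sq, mfnorm_sq, div_mul_eq_mul_div, le_div_iff₀ hr]
  nlinarith [mul_le_mul_of_nonneg_left hA' hr', mul_le_mul_of_nonneg_left hP hr.le]

/-- Let `W, A ∈ ℝ^{p_1×p_2}` with `rank(A) ≤ r`, `rank(W) = r''`,
and `r < r' < r''`.  If `P` is a best rank-`r'` approximation of `W` in Frobenius norm
(as the truncated SVD is, by the Eckart–Young theorem), then
`‖P − W‖_F² ≤ ((r''−r')/(r''−r))·‖A − W‖_F²`. -/
theorem statement12 {p₁ p₂ : ℕ} (W A P : Matrix (Fin p₁) (Fin p₂) ℝ)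
    {r r' r'' : ℕ} (hA : A.rank ≤ r) (hW : W.rank = r'')
    (h1 : r < r') (h2 : r' < r'')
    (hPrank : P.rank ≤ r')
    (hPbest : ∀ B : Matrix (Fin p₁) (Fin p₂) ℝ, B.rank ≤ r' →
      mfnorm (P - W) ≤ mfnorm (B - W)) :
    mfnorm (P - W) ^ 2 ≤ (((r'' : ℝ) - r') / ((r'' : ℝ) - r)) * mfnorm (A - W) ^ 2 :=
  statement12_general W A P hA hW h1 h2 hPbest

end TTpaper
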